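/- The normalization constant of fractional Brownian motion satisfies the identity: for H ∈ (0,1), (1/Γ(H+1/2)²)·[∫₀^∞ ((1+s)^{H-1/2} − s^{H-1/2})² ds + 1/(2H)] = 1/(Γ(2H+1)·sin(πH)). -/

import Mathlib

/-!
Write `a = H - 1/2` and `f(s) = (1 + s)^a - s^a`. For `a > 0` the function
`Φ(s) = s f(s)² + (1 + s)^a f(s)` satisfies `Φ(0) = 1`, `Φ(∞) = 0` and
`Φ' = (2a + 1) f² - a s^(a-1) (1 + s)^(a-1)`; for `a < 0` so does `Φ(s) = s f(s)² + (1 + s)^(2a)`,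
now with `Φ' = (2a + 1) f² + 2a s^a (1 + s)^(a-1)`. Integrating `Φ'` over `(0, ∞)` turns
`2H ∫ f² + 1` into a Beta integral, equal to `Γ(H + 1/2) Γ(2 - 2H) / Γ(3/2 - H)` in both cases.
Euler's reflection formula at `H` and Legendre's duplication formula at `H` and `1 - H` convert
this into `2H Γ(H + 1/2)² / (Γ(2H + 1) sin(πH))`.
-/

open Real MeasureTheory Set Filter Topology

namespace FractionalBrownianMotion

theorem integral_Ioo_rpow_mul_one_sub_rpow {p q : ℝ} (hp : 0 < p) (hq : 0 < q) :
    ∫ x in Ioo (0:ℝ) 1, x ^ (p - 1) * (1 - x) ^ (q - 1) = Gamma p * Gamma q / Gamma (p + q) := by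
  have hofReal : Complex.betaIntegral p q
      = ↑(∫ x in (0:ℝ)..1, x ^ (p - 1) * (1 - x) ^ (q - 1)) := by
    rw [Complex.betaIntegral, ← intervalIntegral.integral_ofReal]
    refine intervalIntegral.integral_congr fun x hx => ?_
    rw [uIcc_of_le zero_le_one] at hx
    simp [Complex.ofReal_cpow hx.1, Complex.ofReal_cpow (sub_nonneg.2 hx.2)]
  have h := Complex.betaIntegral_eq_Gamma_mul_div p q (by simpa) (by simpa)
  rw [hofReal, ← Complex.ofReal_add, Complex.Gamma_ofReal, Complex.Gamma_ofReal,
    Complex.Gamma_ofReal] at h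
  rw [← integral_Ioc_eq_integral_Ioo, ← intervalIntegral.integral_of_le zero_le_one]
  exact_mod_cast h

theorem image_div_one_sub_Ioo : (fun x : ℝ => x / (1 - x)) '' Ioo 0 1 = Ioi 0 := by
  ext s
  refine ⟨?_, fun (hs : 0 < s) => ⟨s / (1 + s), ?_, ?_⟩⟩
  · rintro ⟨x, ⟨hx₀, hx₁⟩, rfl⟩
    exact div_pos hx₀ (sub_pos.2 hx₁)
  · exact ⟨by positivity, (div_lt_one (by positivity)).2 (by linarith)⟩
  · field_simp
    ring

theorem integral_Ioi_rpow_mul_one_add_rpow {p q : ℝ} (hp : 0 < p) (hq : 0 < q) :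
    ∫ s in Ioi (0:ℝ), s ^ (p - 1) * (1 + s) ^ (-(p + q)) = Gamma p * Gamma q / Gamma (p + q) := by
  have hderiv : ∀ x ∈ Ioo (0:ℝ) 1,
      HasDerivWithinAt (fun x => x / (1 - x)) (((1 - x) ^ 2)⁻¹) (Ioo 0 1) x := by
    intro x hx
    have h := (hasDerivAt_id x).div ((hasDerivAt_id x).const_sub 1) (sub_pos.2 hx.2).ne'
    exact h.hasDerivWithinAt.congr_deriv (by simp)
  have hinj : InjOn (fun x : ℝ => x / (1 - x)) (Ioo 0 1) := by
    intro x hx y hy hxy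
    have := sub_pos.2 hx.2
    have := sub_pos.2 hy.2
    field_simp at hxy
    linarith
  rw [← image_div_one_sub_Ioo, integral_image_eq_integral_abs_deriv_smul measurableSet_Ioo
    hderiv hinj, ← integral_Ioo_rpow_mul_one_sub_rpow hp hq]
  refine setIntegral_congr_fun measurableSet_Ioo fun x ⟨hx₀, hx₁⟩ => ?_
  have hx : 0 < 1 - x := sub_pos.2 hx₁
  have h1 : 1 + x / (1 - x) = (1 - x)⁻¹ := by field_simp; ring
  have h2 : (1 - x) ^ (q - 1) = (1 - x) ^ (p + q) / ((1 - x) ^ (p - 1) * (1 - x) ^ 2) := by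
    rw [← rpow_natCast, ← rpow_add hx, ← rpow_sub hx]
    ring_nf
  rw [smul_eq_mul, h1, abs_of_pos (by positivity), div_rpow hx₀.le hx.le, inv_rpow hx.le,
    ← rpow_neg hx.le, neg_neg, h2]
  field_simp

theorem integrableOn_Ioi_of_abs_le_rpow {g : ℝ → ℝ} {C D p q : ℝ} (hg : ContinuousOn g (Ioi 0))
    (hp : -1 < p) (hq : q < -1) (hgp : ∀ s ∈ Ioc (0:ℝ) 1, |g s| ≤ C * s ^ p)
    (hgq : ∀ s ∈ Ioi (1:ℝ), |g s| ≤ D * s ^ q) :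
    IntegrableOn g (Ioi 0) := by
  rw [← Ioc_union_Ioi_eq_Ioi zero_le_one]
  refine IntegrableOn.union ?_ ?_
  · refine Integrable.mono' (((intervalIntegral.intervalIntegrable_rpow' hp).1).const_mul C)
      ((hg.mono Ioc_subset_Ioi_self).aestronglyMeasurable measurableSet_Ioc) ?_
    exact (ae_restrict_iff' measurableSet_Ioc).2 (ae_of_all _ hgp)
  · refine Integrable.mono' ((integrableOn_Ioi_rpow_of_lt hq zero_lt_one).const_mul D)
      ((hg.mono (Ioi_subset_Ioi zero_le_one)).aestronglyMeasurable measurableSet_Ioi) ?_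
    exact (ae_restrict_iff' measurableSet_Ioi).2 (ae_of_all _ hgq)

theorem integrableOn_rpow_mul_one_add_rpow {p q : ℝ} (hp : 0 < p) (hq : 0 < q) :
    IntegrableOn (fun s : ℝ => s ^ (p - 1) * (1 + s) ^ (-(p + q))) (Ioi 0) := by
  have hcont : ContinuousOn (fun s : ℝ => s ^ (p - 1) * (1 + s) ^ (-(p + q))) (Ioi 0) :=
    ContinuousOn.mul (continuousOn_id.rpow_const fun s hs => Or.inl (ne_of_gt hs))
      ((continuousOn_const.add continuousOn_id).rpow_const fun s (hs : 0 < s) =>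
        Or.inl (show (1:ℝ) + s ≠ 0 by positivity))
  refine integrableOn_Ioi_of_abs_le_rpow hcont (C := 1) (D := 1) (by linarith : -1 < p - 1)
    (by linarith : -q - 1 < -1) (fun s ⟨hs, _⟩ => ?_) (fun s hs => ?_)
  · rw [abs_of_nonneg (by positivity), one_mul]
    exact mul_le_of_le_one_right (by positivity)
      (rpow_le_one_of_one_le_of_nonpos (by linarith) (by linarith))
  · have hs : (0:ℝ) < s := zero_lt_one.trans hs
    rw [abs_of_nonneg (by positivity), one_mul, show -q - 1 = (p - 1) + -(p + q) by ring,
      rpow_add hs]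
    exact mul_le_mul_of_nonneg_left (rpow_le_rpow_of_nonpos hs (by linarith) (by linarith))
      (by positivity)

theorem tendsto_rpow_atTop_nhds_zero_of_neg {b : ℝ} (hb : b < 0) :
    Tendsto (fun s : ℝ => s ^ b) atTop (𝓝 0) := by
  simpa using tendsto_rpow_neg_atTop (neg_pos.2 hb)

/-- The Mandelbrot–van Ness kernel `(t - u)₊^a - (-u)₊^a` at `t = 1`, `u = -s`. -/
noncomputable def fbmKernel (a s : ℝ) : ℝ := (1 + s) ^ a - s ^ a

variable {a s : ℝ}

theorem hasDerivAt_fbmKernel (hs : 0 < s) :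
    HasDerivAt (fbmKernel a) (a * (1 + s) ^ (a - 1) - a * s ^ (a - 1)) s := by
  have h₁ := ((hasDerivAt_id' s).const_add 1).rpow_const (p := a)
    (Or.inl (show 1 + s ≠ 0 by positivity))
  have h₂ := (hasDerivAt_id' s).rpow_const (p := a) (Or.inl hs.ne')
  exact (h₁.sub h₂).congr_deriv (by ring)

theorem abs_fbmKernel_le_mul_rpow (ha : a ≤ 1) (hs : 0 < s) :
    |fbmKernel a s| ≤ |a| * s ^ (a - 1) := by
  obtain ⟨c, ⟨hsc, -⟩, hc⟩ := exists_hasDerivAt_eq_slope (fun t : ℝ => t ^ a)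
    (fun t => a * t ^ (a - 1)) (lt_add_one s)
    (continuousOn_id.rpow_const fun t ht => Or.inl (hs.trans_le ht.1).ne')
    (fun t ht => hasDerivAt_rpow_const (Or.inl (hs.trans ht.1).ne'))
  rw [add_sub_cancel_left, div_one] at hc
  rw [fbmKernel, add_comm, ← hc, abs_mul, abs_of_pos (rpow_pos_of_pos (hs.trans hsc) _)]
  exact mul_le_mul_of_nonneg_left (rpow_le_rpow_of_nonpos hs hsc.le (by linarith)) (abs_nonneg a)

theorem abs_fbmKernel_le_rpow_min (ha : a ≤ 1) (hs : 0 < s) :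
    |fbmKernel a s| ≤ s ^ min a 0 := by
  rw [fbmKernel, abs_sub_le_iff]
  rcases le_total a 0 with ha₀ | ha₀
  · rw [min_eq_left ha₀]
    have := rpow_le_rpow_of_nonpos hs (le_add_of_nonneg_left zero_le_one) ha₀
    constructor <;> linarith [rpow_nonneg (by linarith : (0:ℝ) ≤ 1 + s) a, rpow_nonneg hs.le a]
  · rw [min_eq_right ha₀, rpow_zero]
    have hsub := rpow_add_le_add_rpow zero_le_one hs.le ha₀ ha
    have hmono := rpow_le_rpow hs.le (le_add_of_nonneg_left zero_le_one) ha₀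
    rw [one_rpow] at hsub
    constructor <;> linarith

theorem fbmKernel_sq_le_mul_rpow (ha : a ≤ 1) (hs : 0 < s) :
    fbmKernel a s ^ 2 ≤ a ^ 2 * s ^ (2 * a - 2) := by
  have h := abs_fbmKernel_le_mul_rpow ha hs
  calc fbmKernel a s ^ 2 = |fbmKernel a s| ^ 2 := (sq_abs _).symm
    _ ≤ (|a| * s ^ (a - 1)) ^ 2 := by gcongr
    _ = a ^ 2 * s ^ (2 * a - 2) := by
      rw [mul_pow, sq_abs, show 2 * a - 2 = (a - 1) * (2 : ℕ) by push_cast; ring,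
        rpow_mul_natCast hs.le]

theorem fbmKernel_sq_le_rpow_min (ha : a ≤ 1) (hs : 0 < s) :
    fbmKernel a s ^ 2 ≤ s ^ (min a 0 * 2) := by
  rw [show min a 0 * 2 = min a 0 * (2 : ℕ) by norm_num, rpow_mul_natCast hs.le, ← sq_abs]
  exact pow_le_pow_left₀ (abs_nonneg _) (abs_fbmKernel_le_rpow_min ha hs) 2

theorem continuousOn_fbmKernel : ContinuousOn (fbmKernel a) (Ioi 0) :=
  fun _ hx => (hasDerivAt_fbmKernel hx).continuousAt.continuousWithinAt

theorem integrableOn_fbmKernel_sq (ha₀ : -(1/2) < a) (ha₁ : a < 1/2) :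
    IntegrableOn (fun s => fbmKernel a s ^ 2) (Ioi 0) := by
  refine integrableOn_Ioi_of_abs_le_rpow (continuousOn_fbmKernel.pow 2) (C := 1) (D := a ^ 2)
    (p := min a 0 * 2) (q := 2 * a - 2) (by linarith [lt_min ha₀ (by norm_num : -(1/2:ℝ) < 0)])
    (by linarith) (fun s hs => ?_) (fun s hs => ?_)
  · rw [abs_sq, one_mul]
    exact fbmKernel_sq_le_rpow_min (by linarith) hs.1
  · rw [abs_sq]
    exact fbmKernel_sq_le_mul_rpow (by linarith) (zero_lt_one.trans hs)

theorem tendsto_mul_fbmKernel_sq_atTop (ha : a < 1/2) :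
    Tendsto (fun s => s * fbmKernel a s ^ 2) atTop (𝓝 0) := by
  have hlim : Tendsto (fun s : ℝ => a ^ 2 * s ^ (2 * a - 1)) atTop (𝓝 0) := by
    simpa using
      (tendsto_rpow_atTop_nhds_zero_of_neg (b := 2 * a - 1) (by linarith)).const_mul (a ^ 2)
  refine squeeze_zero_norm' ?_ hlim
  filter_upwards [eventually_gt_atTop 0] with s hs
  rw [norm_mul, norm_of_nonneg hs.le, norm_pow, norm_eq_abs, sq_abs,
    show 2 * a - 1 = 1 + (2 * a - 2) by ring, rpow_add hs, rpow_one]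
  calc s * fbmKernel a s ^ 2 ≤ s * (a ^ 2 * s ^ (2 * a - 2)) :=
        mul_le_mul_of_nonneg_left (fbmKernel_sq_le_mul_rpow (by linarith) hs) hs.le
    _ = a ^ 2 * (s * s ^ (2 * a - 2)) := by ring

theorem continuousWithinAt_mul_fbmKernel_sq (ha₀ : -(1/2) < a) (ha₁ : a ≤ 1) :
    ContinuousWithinAt (fun s => s * fbmKernel a s ^ 2) (Ici 0) 0 := by
  have hexp : 0 < 1 + min a 0 * 2 := by linarith [lt_min ha₀ (by norm_num : -(1/2:ℝ) < 0)]
  have hlim : Tendsto (fun s : ℝ => s ^ (1 + min a 0 * 2)) (𝓝[≥] 0) (𝓝 0) := by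
    simpa [zero_rpow hexp.ne'] using
      ((continuousAt_rpow_const 0 _ (Or.inr hexp.le)).tendsto).mono_left nhdsWithin_le_nhds
  rw [ContinuousWithinAt, zero_mul]
  refine squeeze_zero_norm' ?_ hlim
  filter_upwards [self_mem_nhdsWithin] with s (hs : 0 ≤ s)
  rcases hs.eq_or_lt with rfl | hs
  · simp [zero_rpow hexp.ne']
  rw [norm_mul, norm_of_nonneg hs.le, norm_pow, norm_eq_abs, sq_abs, rpow_add hs, rpow_one]
  exact mul_le_mul_of_nonneg_left (fbmKernel_sq_le_rpow_min ha₁ hs) hs.le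

noncomputable def fbmPrimitiveOfPos (a s : ℝ) : ℝ :=
  s * fbmKernel a s ^ 2 + (1 + s) ^ a * fbmKernel a s

noncomputable def fbmPrimitiveOfNeg (a s : ℝ) : ℝ :=
  s * fbmKernel a s ^ 2 + (1 + s) ^ (2 * a)

theorem hasDerivAt_fbmPrimitiveOfPos (hs : 0 < s) :
    HasDerivAt (fbmPrimitiveOfPos a)
      ((2 * a + 1) * fbmKernel a s ^ 2 - a * (s ^ (a - 1) * (1 + s) ^ (a - 1))) s := by
  have h1s : 1 + s ≠ 0 := by positivity
  refine (((hasDerivAt_id' s).mul ((hasDerivAt_fbmKernel hs).pow 2)).add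
    ((((hasDerivAt_id' s).const_add 1).rpow_const (p := a) (Or.inl h1s)).mul
      (hasDerivAt_fbmKernel hs))).congr_deriv ?_
  simp only [fbmKernel, Pi.pow_apply, rpow_sub_one hs.ne', rpow_sub_one h1s]
  field_simp
  ring

theorem hasDerivAt_fbmPrimitiveOfNeg (hs : 0 < s) :
    HasDerivAt (fbmPrimitiveOfNeg a)
      ((2 * a + 1) * fbmKernel a s ^ 2 + 2 * a * (s ^ a * (1 + s) ^ (a - 1))) s := by
  have h1s : 1 + s ≠ 0 := by positivity
  refine (((hasDerivAt_id' s).mul ((hasDerivAt_fbmKernel hs).pow 2)).add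
    (((hasDerivAt_id' s).const_add 1).rpow_const (p := 2 * a) (Or.inl h1s))).congr_deriv ?_
  have hsq : (1 + s) ^ (2 * a) = ((1 + s) ^ a) ^ 2 := by
    rw [mul_comm, ← rpow_mul_natCast (by positivity)]
    norm_num
  simp only [fbmKernel, Pi.pow_apply, rpow_sub_one hs.ne', rpow_sub_one h1s, hsq]
  field_simp
  ring

theorem tendsto_fbmPrimitiveOfPos_atTop (ha₀ : 0 < a) (ha₁ : a < 1/2) :
    Tendsto (fbmPrimitiveOfPos a) atTop (𝓝 0) := by
  have hlim := ((tendsto_rpow_atTop_nhds_zero_of_neg (b := a - 1) (by linarith)).add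
    (tendsto_rpow_atTop_nhds_zero_of_neg (b := 2 * a - 1) (by linarith))).const_mul |a|
  rw [add_zero, mul_zero] at hlim
  have htail : Tendsto (fun s => (1 + s) ^ a * fbmKernel a s) atTop (𝓝 0) := by
    refine squeeze_zero_norm' ?_ hlim
    filter_upwards [eventually_gt_atTop 0] with s hs
    have hsub := rpow_add_le_add_rpow zero_le_one hs.le ha₀.le (by linarith)
    rw [one_rpow] at hsub
    rw [norm_mul, norm_of_nonneg (by positivity), norm_eq_abs,
      show 2 * a - 1 = a + (a - 1) by ring, rpow_add hs]
    calc (1 + s) ^ a * |fbmKernel a s| ≤ (1 + s ^ a) * (|a| * s ^ (a - 1)) :=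
          mul_le_mul hsub (abs_fbmKernel_le_mul_rpow (by linarith) hs) (abs_nonneg _)
            (by positivity)
      _ = |a| * (s ^ (a - 1) + s ^ a * s ^ (a - 1)) := by ring
  rw [← add_zero (0:ℝ)]
  exact (tendsto_mul_fbmKernel_sq_atTop ha₁).add htail

theorem two_mul_add_one_mul_integral_fbmKernel_sq_add_one_of_pos (ha₀ : 0 < a) (ha₁ : a < 1/2) :
    (2 * a + 1) * (∫ s in Ioi 0, fbmKernel a s ^ 2) + 1
      = Gamma (a + 1) * Gamma (1 - 2 * a) / Gamma (1 - a) := by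
  have hB := integral_Ioi_rpow_mul_one_add_rpow (p := a) (q := 1 - 2 * a) ha₀ (by linarith)
  have hBint := integrableOn_rpow_mul_one_add_rpow (p := a) (q := 1 - 2 * a) ha₀ (by linarith)
  rw [show -(a + (1 - 2 * a)) = a - 1 by ring, show a + (1 - 2 * a) = 1 - a by ring] at hB
  rw [show -(a + (1 - 2 * a)) = a - 1 by ring] at hBint
  have hcont : ContinuousWithinAt (fbmPrimitiveOfPos a) (Ici 0) 0 := by
    have h0 : ContinuousAt (fun s : ℝ => s ^ a) 0 := continuousAt_rpow_const _ _ (Or.inr ha₀.le)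
    have h1 : ContinuousAt (fun s : ℝ => (1 + s) ^ a) 0 :=
      (continuousAt_const.add continuousAt_id).rpow_const (Or.inl (by norm_num))
    exact (continuousWithinAt_mul_fbmKernel_sq (by linarith) (by linarith)).add
      (h1.mul (h1.sub h0)).continuousWithinAt
  have hsq := (integrableOn_fbmKernel_sq (a := a) (by linarith) ha₁).const_mul (2 * a + 1)
  have hFTC := integral_Ioi_of_hasDerivAt_of_tendsto hcont
    (fun s hs => hasDerivAt_fbmPrimitiveOfPos hs) (hsq.sub (hBint.const_mul a))
    (tendsto_fbmPrimitiveOfPos_atTop ha₀ ha₁)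
  have hΦ₀ : fbmPrimitiveOfPos a 0 = 1 := by
    simp [fbmPrimitiveOfPos, fbmKernel, zero_rpow ha₀.ne']
  rw [integral_sub hsq (hBint.const_mul a), integral_const_mul, integral_const_mul, hB,
    hΦ₀] at hFTC
  rw [Gamma_add_one ha₀.ne']
  linear_combination hFTC

theorem two_mul_add_one_mul_integral_fbmKernel_sq_add_one_of_neg (ha₀ : -(1/2) < a)
    (ha₁ : a < 0) :
    (2 * a + 1) * (∫ s in Ioi 0, fbmKernel a s ^ 2) + 1
      = Gamma (a + 1) * Gamma (1 - 2 * a) / Gamma (1 - a) := by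
  have hB := integral_Ioi_rpow_mul_one_add_rpow (p := a + 1) (q := -(2 * a)) (by linarith)
    (by linarith)
  have hBint := integrableOn_rpow_mul_one_add_rpow (p := a + 1) (q := -(2 * a)) (by linarith)
    (by linarith)
  rw [show -(a + 1 + -(2 * a)) = a - 1 by ring, show a + 1 + -(2 * a) = 1 - a by ring,
    add_sub_cancel_right] at hB
  rw [show -(a + 1 + -(2 * a)) = a - 1 by ring, add_sub_cancel_right] at hBint
  have hcont : ContinuousWithinAt (fbmPrimitiveOfNeg a) (Ici 0) 0 :=
    (continuousWithinAt_mul_fbmKernel_sq ha₀ (by linarith)).add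
      ((continuousAt_const.add continuousAt_id).rpow_const
        (Or.inl (by norm_num))).continuousWithinAt
  have htail : Tendsto (fun s : ℝ => (1 + s) ^ (2 * a)) atTop (𝓝 0) :=
    (tendsto_rpow_atTop_nhds_zero_of_neg (by linarith)).comp
      (tendsto_atTop_add_const_left _ 1 tendsto_id)
  have hsq := (integrableOn_fbmKernel_sq ha₀ (by linarith)).const_mul (2 * a + 1)
  have hlim : Tendsto (fbmPrimitiveOfNeg a) atTop (𝓝 0) := by
    rw [← add_zero (0:ℝ)]
    exact (tendsto_mul_fbmKernel_sq_atTop (by linarith)).add htail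
  have hFTC := integral_Ioi_of_hasDerivAt_of_tendsto hcont
    (fun s hs => hasDerivAt_fbmPrimitiveOfNeg hs) (hsq.add (hBint.const_mul (2 * a))) hlim
  have hΦ₀ : fbmPrimitiveOfNeg a 0 = 1 := by simp [fbmPrimitiveOfNeg]
  rw [integral_add hsq (hBint.const_mul _), integral_const_mul, integral_const_mul, hB,
    hΦ₀] at hFTC
  rw [show 1 - 2 * a = -(2 * a) + 1 by ring, Gamma_add_one (s := -(2 * a)) (by linarith)]
  linear_combination hFTC

theorem two_mul_add_one_mul_integral_fbmKernel_sq_add_one (ha₀ : -(1/2) < a) (ha₁ : a < 1/2) :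
    (2 * a + 1) * (∫ s in Ioi 0, fbmKernel a s ^ 2) + 1
      = Gamma (a + 1) * Gamma (1 - 2 * a) / Gamma (1 - a) := by
  rcases lt_trichotomy a 0 with ha | rfl | ha
  · exact two_mul_add_one_mul_integral_fbmKernel_sq_add_one_of_neg ha₀ ha
  · simp [fbmKernel]
  · exact two_mul_add_one_mul_integral_fbmKernel_sq_add_one_of_pos ha ha₁

theorem Gamma_two_mul_add_one_mul_sin_mul_Gamma_two_sub {H : ℝ} (hH₀ : 0 < H) (hH₁ : H < 1) :
    Gamma (2 * H + 1) * sin (π * H) * Gamma (2 - 2 * H)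
      = 2 * H * Gamma (H + 1/2) * Gamma (3/2 - H) := by
  have hsin : sin (π * H) ≠ 0 := (sin_pos_of_pos_of_lt_pi (by positivity)
    (by nlinarith [pi_pos])).ne'
  have hrefl := Gamma_mul_Gamma_one_sub H
  have hdup₁ := Gamma_mul_Gamma_add_half H
  have hdup₂ := Gamma_mul_Gamma_add_half (1 - H)
  rw [show 1 - H + 1/2 = 3/2 - H by ring, show 2 * (1 - H) = 2 - 2 * H by ring] at hdup₂
  have hpow : (2:ℝ) ^ (1 - 2 * H) * 2 ^ (1 - (2 - 2 * H)) = 1 := by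
    rw [← rpow_add two_pos, show 1 - 2 * H + (1 - (2 - 2 * H)) = 0 by ring, rpow_zero]
  have hπ : √π * √π = π := mul_self_sqrt pi_pos.le
  have hΓ : Gamma H * Gamma (1 - H) ≠ 0 :=
    mul_ne_zero (Gamma_pos_of_pos hH₀).ne' (Gamma_pos_of_pos (by linarith)).ne'
  rw [Gamma_add_one (by positivity)]
  have hrefl' : Gamma H * Gamma (1 - H) * sin (π * H) = π := by
    rw [hrefl, div_mul_cancel₀ π hsin]
  refine mul_left_cancel₀ hΓ ?_
  linear_combination (2 * H * Gamma (2 * H) * Gamma (2 - 2 * H)) * hrefl'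
    - 2 * H * Gamma (1 - H) * Gamma (3/2 - H) * hdup₁
    - 2 * H * Gamma (2 * H) * 2 ^ (1 - 2 * H) * √π * hdup₂
    - 2 * H * Gamma (2 * H) * Gamma (2 - 2 * H) * √π * √π * hpow
    - 2 * H * Gamma (2 * H) * Gamma (2 - 2 * H) * hπ

end FractionalBrownianMotion

open FractionalBrownianMotion in
/-- The normalization constant of fractional Brownian motion:
for `H ∈ (0,1)`,
`(1/Γ(H+1/2)²)·[∫₀^∞ ((1+s)^{H-1/2} − s^{H-1/2})² ds + 1/(2H)] = 1/(Γ(2H+1)·sin(πH))`. -/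
theorem fbm_normalization_constant (H : ℝ) (hH : H ∈ Set.Ioo (0:ℝ) 1) :
    (1 / (Real.Gamma (H + 1/2))^2) *
      ((∫ s in Set.Ioi (0:ℝ), ((1+s) ^ (H - 1/2) - s ^ (H - 1/2))^2) + 1/(2*H))
      = 1 / (Real.Gamma (2*H + 1) * Real.sin (Real.pi * H)) := by
  obtain ⟨hH₀, hH₁⟩ := hH
  have hI := two_mul_add_one_mul_integral_fbmKernel_sq_add_one (a := H - 1/2) (by linarith)
    (by linarith)
  rw [show 2 * (H - 1/2) + 1 = 2 * H by ring, show H - 1/2 + 1 = H + 1/2 by ring,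
    show 1 - 2 * (H - 1/2) = 2 - 2 * H by ring, show 1 - (H - 1/2) = 3/2 - H by ring] at hI
  have hΓ := Gamma_two_mul_add_one_mul_sin_mul_Gamma_two_sub hH₀ hH₁
  have hP := Gamma_pos_of_pos (show 0 < H + 1/2 by linarith)
  have hQ := Gamma_pos_of_pos (show 0 < 3/2 - H by linarith)
  have hT := Gamma_pos_of_pos (show 0 < 2 * H + 1 by linarith)
  have hS := sin_pos_of_pos_of_lt_pi (by positivity : 0 < π * H) (by nlinarith [pi_pos])
  change 1 / Gamma (H + 1/2) ^ 2 * ((∫ s in Ioi 0, fbmKernel (H - 1/2) s ^ 2) + 1 / (2 * H)) = _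
  set I := ∫ s in Ioi 0, fbmKernel (H - 1/2) s ^ 2
  set P := Gamma (H + 1/2)
  set Q := Gamma (3/2 - H)
  set T := Gamma (2 * H + 1)
  set S := sin (π * H)
  rw [eq_div_iff hQ.ne'] at hI
  field_simp
  refine mul_right_cancel₀ hQ.ne' ?_
  linear_combination T * S * hI + P * hΓ
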